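/- arXiv:1307.2751 — 2 statements merged into one kernel-verified Lean document; each statement's English description precedes it below -/
import Mathlib

section
/- Let μ be a finite measure space with infinitely many disjoint sets of positive measure, i.e., there exist pairwise disjoint measurable sets A_1, A_2, ... with μ(A_n) > 0 and ⋃ A_n = Ω. Then the function f = Σ_k (ln k)·1_{B_k}, where (B_k) is a suitable subsequence of (A_n) with μ(B_k) ≤ 1/k², belongs to L^p(μ) for every p ≥ 1 but is essentially unbounded; consequently L^∞(μ) ⊊ L^ω(μ). -/
/-!
Since the `A n` are disjoint and `μ` is finite, `∑ μ (A n) < ∞`, so `μ (A n) → 0` and a subsequence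
`B k` has `μ (B k) ≤ 2⁻ᵏ`. The step function `f = ∑ k • 𝟙_{B k}` then has
`∫ |f|ᵖ = ∑ kᵖ μ (B k) ≤ ∑ kᵖ 2⁻ᵏ < ∞` for every `p`, while `|f| ≥ k` on the non-null set `B k`.
-/

open MeasureTheory ENNReal Filter Topology Set Function

section StepFunction

variable {Ω ι M N : Type*}
  [AddCommMonoid M] [TopologicalSpace M] [AddCommMonoid N] [TopologicalSpace N]
  {B : ι → Set Ω}

noncomputable def stepFunction (B : ι → Set Ω) (c : ι → M) (ω : Ω) : M :=
  ∑' j, (B j).indicator (fun _ ↦ c j) ω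

lemma hasSum_indicator_const_of_mem (hB : Pairwise (Disjoint on B)) (c : ι → M) {k : ι} {ω : Ω}
    (hω : ω ∈ B k) : HasSum (fun j ↦ (B j).indicator (fun _ ↦ c j) ω) (c k) := by
  simpa [indicator_of_mem hω] using hasSum_single (f := fun j ↦ (B j).indicator (fun _ ↦ c j) ω) k
    fun j hj ↦ indicator_of_notMem ((hB hj).notMem_of_mem_right hω) _

lemma hasSum_indicator_const_of_forall_notMem (c : ι → M) {ω : Ω} (hω : ∀ k, ω ∉ B k) :
    HasSum (fun j ↦ (B j).indicator (fun _ ↦ c j) ω) 0 := by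
  simp [hω]

lemma summable_indicator_const (hB : Pairwise (Disjoint on B)) (c : ι → M) (ω : Ω) :
    Summable (fun j ↦ (B j).indicator (fun _ ↦ c j) ω) := by
  by_cases h : ∃ k, ω ∈ B k
  · obtain ⟨k, hk⟩ := h
    exact (hasSum_indicator_const_of_mem hB c hk).summable
  · simp only [not_exists] at h
    exact (hasSum_indicator_const_of_forall_notMem c h).summable

variable [T2Space M] [T2Space N]

lemma stepFunction_eq_of_mem (hB : Pairwise (Disjoint on B)) (c : ι → M) {k : ι} {ω : Ω}
    (hω : ω ∈ B k) : stepFunction B c ω = c k :=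
  (hasSum_indicator_const_of_mem hB c hω).tsum_eq

lemma map_stepFunction (hB : Pairwise (Disjoint on B)) {F : M → N} (hF : F 0 = 0) (c : ι → M)
    (ω : Ω) : F (stepFunction B c ω) = stepFunction B (F ∘ c) ω := by
  by_cases h : ∃ k, ω ∈ B k
  · obtain ⟨k, hk⟩ := h
    rw [stepFunction_eq_of_mem hB c hk, stepFunction_eq_of_mem hB _ hk, comp_apply]
  · simp only [not_exists] at h
    rw [stepFunction, stepFunction, (hasSum_indicator_const_of_forall_notMem c h).tsum_eq,
      (hasSum_indicator_const_of_forall_notMem _ h).tsum_eq, hF]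

end StepFunction

lemma ENNReal.tsum_natCast_pow_mul_two_inv_pow_ne_top (n : ℕ) :
    ∑' k : ℕ, (k : ℝ≥0∞) ^ n * 2⁻¹ ^ k ≠ ∞ := by
  have h := summable_pow_mul_geometric_of_norm_lt_one (R := ℝ) n (r := 2⁻¹) (by norm_num)
  have hterm (k : ℕ) : (k : ℝ≥0∞) ^ n * 2⁻¹ ^ k = ENNReal.ofReal ((k : ℝ) ^ n * 2⁻¹ ^ k) := by
    rw [ofReal_mul (by positivity), ofReal_pow (by positivity), ofReal_pow (by positivity),
      ofReal_natCast, ofReal_inv_of_pos two_pos, ofReal_ofNat]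
  rw [tsum_congr hterm, ← ENNReal.ofReal_tsum_of_nonneg (fun k ↦ by positivity) h]
  exact ofReal_ne_top

namespace MeasureTheory

variable {Ω ι E : Type*} [MeasurableSpace Ω] {μ : Measure Ω} {B : ι → Set Ω}

lemma stronglyMeasurable_stepFunction [Countable ι] [AddCommMonoid E] [TopologicalSpace E]
    [TopologicalSpace.PseudoMetrizableSpace E] [ContinuousAdd E]
    (hBm : ∀ j, MeasurableSet (B j)) (hB : Pairwise (Disjoint on B)) (c : ι → E) :
    StronglyMeasurable (stepFunction B c) := by
  have hsum : HasSum (fun j ↦ (B j).indicator fun _ ↦ c j) (stepFunction B c) :=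
    Pi.hasSum.2 fun ω ↦ (summable_indicator_const hB c ω).hasSum
  exact stronglyMeasurable_of_tendsto atTop
    (fun s ↦ Finset.stronglyMeasurable_sum s fun j _ ↦ stronglyMeasurable_const.indicator (hBm j))
    hsum

variable [NormedAddCommGroup E]

lemma lintegral_enorm_rpow_stepFunction [Countable ι] (hBm : ∀ j, MeasurableSet (B j))
    (hB : Pairwise (Disjoint on B)) {p : ℝ} (hp : 0 < p) (c : ι → E) :
    ∫⁻ ω, ‖stepFunction B c ω‖ₑ ^ p ∂μ = ∑' j, ‖c j‖ₑ ^ p * μ (B j) := by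
  simp_rw [map_stepFunction hB (F := fun x : E ↦ ‖x‖ₑ ^ p) (by simp [hp]), stepFunction]
  rw [lintegral_tsum fun j ↦ (measurable_const.indicator (hBm j)).aemeasurable]
  simp_rw [comp_apply, lintegral_indicator_const (hBm _)]

lemma memLp_stepFunction [Countable ι] (hBm : ∀ j, MeasurableSet (B j))
    (hB : Pairwise (Disjoint on B)) {p : ℝ≥0∞} (hp0 : p ≠ 0) (hp : p ≠ ∞) (c : ι → E)
    (hc : ∑' j, ‖c j‖ₑ ^ p.toReal * μ (B j) ≠ ∞) : MemLp (stepFunction B c) p μ := by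
  refine ⟨(stronglyMeasurable_stepFunction hBm hB c).aestronglyMeasurable, ?_⟩
  rw [eLpNorm_eq_lintegral_rpow_enorm_toReal hp0 hp,
    lintegral_enorm_rpow_stepFunction hBm hB (toReal_pos hp0 hp)]
  exact rpow_lt_top_of_nonneg (by positivity) hc

lemma not_memLp_top_of_forall_le_enorm {f : Ω → E} {B : ℕ → Set Ω} (hB : ∀ n, μ (B n) ≠ 0)
    (hf : ∀ n, ∀ ω ∈ B n, (n : ℝ≥0∞) ≤ ‖f ω‖ₑ) : ¬ MemLp f ∞ μ := by
  intro hmem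
  obtain ⟨n, hn⟩ := ENNReal.exists_nat_gt (eLpNorm_exponent_top (f := f) ▸ hmem.eLpNorm_ne_top)
  exact hB n (measure_mono_null (fun ω hω ↦ hn.trans_le (hf n ω hω)) meas_eLpNormEssSup_lt)

lemma tendsto_measure_atTop_zero_of_pairwise_disjoint [IsFiniteMeasure μ] {A : ℕ → Set Ω}
    (hmeas : ∀ n, NullMeasurableSet (A n) μ) (hdisj : Pairwise (Disjoint on A)) :
    Tendsto (fun n ↦ μ (A n)) atTop (𝓝 0) := by
  refine ENNReal.tendsto_atTop_zero_of_tsum_ne_top ?_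
  rw [← measure_iUnion₀ (hdisj.mono fun _ _ h ↦ h.aedisjoint) hmeas]
  exact measure_ne_top μ _

end MeasureTheory

theorem Linfty_strictly_contained_in_Lomega_general {Ω : Type*} [MeasurableSpace Ω]
    (μ : Measure Ω) [IsFiniteMeasure μ] (A : ℕ → Set Ω)
    (hmeas : ∀ n, MeasurableSet (A n)) (hdisj : Pairwise (Function.onFun Disjoint A))
    (hpos : ∀ n, 0 < μ (A n)) :
    ∃ f : Ω → ℝ, (∀ p : ℝ, 1 ≤ p → MemLp f (ENNReal.ofReal p) μ) ∧ ¬ MemLp f ∞ μ := by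
  have hA : Tendsto (fun n ↦ μ (A n)) atTop (𝓝 0) :=
    tendsto_measure_atTop_zero_of_pairwise_disjoint (fun n ↦ (hmeas n).nullMeasurableSet) hdisj
  obtain ⟨φ, hφ, hφμ⟩ := extraction_forall_of_eventually fun k ↦
    hA.eventually_le_const (ENNReal.pow_pos (by norm_num) k : (0 : ℝ≥0∞) < 2⁻¹ ^ k)
  set B := A ∘ φ
  have hBm : ∀ k, MeasurableSet (B k) := fun k ↦ hmeas (φ k)
  have hB : Pairwise (Disjoint on B) := fun i j hij ↦ hdisj (hφ.injective.ne hij)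
  have hmemLp (n : ℕ) (hn : n ≠ 0) : MemLp (stepFunction B fun k ↦ (k : ℝ)) n μ := by
    refine memLp_stepFunction hBm hB (Nat.cast_ne_zero.2 hn) (natCast_ne_top n) _ <|
      ne_top_of_le_ne_top (tsum_natCast_pow_mul_two_inv_pow_ne_top n) <|
      ENNReal.tsum_le_tsum fun k ↦ ?_
    simp only [Real.enorm_natCast, toReal_natCast, rpow_natCast]
    gcongr
    exact hφμ k
  refine ⟨stepFunction B fun k ↦ (k : ℝ), fun p hp ↦ ?_, ?_⟩
  · refine (hmemLp ⌈p⌉₊ (Nat.ceil_pos.2 (zero_lt_one.trans_le hp)).ne').mono_exponent ?_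
    rw [← ofReal_natCast]
    exact ofReal_le_ofReal (Nat.le_ceil p)
  · refine not_memLp_top_of_forall_le_enorm (fun k ↦ (hpos (φ k)).ne') fun k ω hω ↦ ?_
    rw [stepFunction_eq_of_mem hB _ hω, Real.enorm_natCast]

theorem Linfty_strictly_contained_in_Lomega {Ω : Type*} [MeasurableSpace Ω]
    (μ : Measure Ω) [IsFiniteMeasure μ] (A : ℕ → Set Ω)
    (hmeas : ∀ n, MeasurableSet (A n)) (hdisj : Pairwise (Function.onFun Disjoint A))
    (hpos : ∀ n, 0 < μ (A n)) (hcover : (⋃ n, A n) = Set.univ) :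
    ∃ f : Ω → ℝ, (∀ p : ℝ, 1 ≤ p → MemLp f (ENNReal.ofReal p) μ) ∧ ¬ MemLp f ∞ μ :=
  Linfty_strictly_contained_in_Lomega_general μ A hmeas hdisj hpos
end

section
/- Let μ be a finite measure and suppose a net (or sequence) f_α in L^ω(μ) = ⋂_{p≥1}L^p(μ) is order-convergent to f ∈ L^ω(μ): there exist g_α ≤ f_α ≤ h_α with g_α ↑ f and h_α ↓ f. Then ‖f_α − f‖_p → 0 for every p ≥ 1. -/
/-!
Almost everywhere `g 0 ≤ g n ≤ f n ≤ h n ≤ h 0` and `g 0 ≤ F ≤ h 0`, so `|f n - F| ≤ h 0 - g 0`,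
a fixed `L^p` function, while `f n - F → 0` because `f n` is squeezed between `g n ↑ F` and
`h n ↓ F`. Dominated convergence in `L^p` then gives `‖f n - F‖_p → 0`.
-/

open MeasureTheory ENNReal Filter

/-- The Arens space `L^ω(μ) = ⋂_{p ≥ 1} L^p(μ)` as a predicate. -/
def MemLomega {Ω : Type*} [MeasurableSpace Ω] (f : Ω → ℝ) (μ : Measure Ω) : Prop :=
  ∀ p : ℝ, 1 ≤ p → MemLp f (ENNReal.ofReal p) μ

open Topology

theorem tendsto_eLpNorm_of_dominated_convergence {α E : Type*} [MeasurableSpace α]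
    [NormedAddCommGroup E] {μ : Measure α} {p : ℝ≥0∞} (hp0 : p ≠ 0) (hp : p ≠ ∞)
    {u : ℕ → α → E} {bound : α → ℝ} (hu : ∀ n, AEStronglyMeasurable (u n) μ)
    (h_bound : ∀ n, ∀ᵐ x ∂μ, ‖u n x‖ ≤ bound x) (hbound : MemLp bound p μ)
    (h_lim : ∀ᵐ x ∂μ, Tendsto (fun n => u n x) atTop (𝓝 0)) :
    Tendsto (fun n => eLpNorm (u n) p μ) atTop (𝓝 0) := by
  have hp_pos : 0 < p.toReal := ENNReal.toReal_pos hp0 hp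
  have h_lintegral : Tendsto (fun n => ∫⁻ x, ‖u n x‖ₑ ^ p.toReal ∂μ) atTop (𝓝 0) := by
    simpa using tendsto_lintegral_of_dominated_convergence' (f := 0)
      (fun x => ‖bound x‖ₑ ^ p.toReal) (fun n => (hu n).enorm.pow_const _)
      (fun n => (h_bound n).mono fun x hx =>
        ENNReal.rpow_le_rpow (enorm_le_iff_norm_le.2 (hx.trans (le_abs_self _))) hp_pos.le)
      (lintegral_rpow_enorm_lt_top_of_eLpNorm_lt_top hp0 hp hbound.eLpNorm_lt_top).ne
      (h_lim.mono fun x hx => by simpa [hp_pos] using hx.enorm.ennrpow_const p.toReal)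
  simp_rw [eLpNorm_eq_lintegral_rpow_enorm_toReal hp0 hp]
  simpa [hp_pos] using h_lintegral.ennrpow_const (1 / p.toReal)

theorem abs_sub_le_of_monotone_antitone_sandwich {ι : Type*} [Preorder ι] [IsDirectedOrder ι]
    {g x h : ι → ℝ} {L : ℝ} (hg : Monotone g) (hgL : Tendsto g atTop (𝓝 L))
    (hh : Antitone h) (hhL : Tendsto h atTop (𝓝 L)) (hgx : g ≤ x) (hxh : x ≤ h)
    {i n : ι} (hin : i ≤ n) : |x n - L| ≤ h i - g i :=
  Real.dist_le_of_mem_Icc ⟨(hg hin).trans (hgx n), (hxh n).trans (hh hin)⟩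
    ⟨hg.ge_of_tendsto hgL i, hh.le_of_tendsto hhL i⟩

theorem order_convergence_implies_Lp_convergence {Ω : Type*} [MeasurableSpace Ω]
    (μ : Measure Ω) [IsFiniteMeasure μ]
    (f g h : ℕ → Ω → ℝ) (F : Ω → ℝ)
    (hf : ∀ n, MemLomega (f n) μ) (hg : ∀ n, MemLomega (g n) μ)
    (hh : ∀ n, MemLomega (h n) μ) (hF : MemLomega F μ)
    (hsq : ∀ᵐ ω ∂μ, ∀ n, g n ω ≤ f n ω ∧ f n ω ≤ h n ω)
    (hgmono : ∀ᵐ ω ∂μ, Monotone (fun n => g n ω) ∧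
      Tendsto (fun n => g n ω) atTop (nhds (F ω)))
    (hhanti : ∀ᵐ ω ∂μ, Antitone (fun n => h n ω) ∧
      Tendsto (fun n => h n ω) atTop (nhds (F ω))) :
    ∀ p : ℝ, 1 ≤ p →
      Tendsto (fun n => eLpNorm (f n - F) (ENNReal.ofReal p) μ) atTop (nhds 0) := by
  intro p hp
  have hp0 : ENNReal.ofReal p ≠ 0 := (ofReal_pos.2 (by linarith)).ne'
  refine tendsto_eLpNorm_of_dominated_convergence hp0 ofReal_ne_top
    (fun n => (hf n p hp).1.sub (hF p hp).1) (fun n => ?_) ((hh 0 p hp).sub (hg 0 p hp)) ?_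
  · filter_upwards [hsq, hgmono, hhanti] with ω hsq ⟨hgω, hgF⟩ ⟨hhω, hhF⟩
    exact abs_sub_le_of_monotone_antitone_sandwich hgω hgF hhω hhF
      (fun n => (hsq n).1) (fun n => (hsq n).2) n.zero_le
  · filter_upwards [hsq, hgmono, hhanti] with ω hsq ⟨_, hgF⟩ ⟨_, hhF⟩
    exact tendsto_sub_nhds_zero_iff.2 <| tendsto_of_tendsto_of_tendsto_of_le_of_le hgF hhF
      (fun n => (hsq n).1) (fun n => (hsq n).2)
end
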